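/- Suppose α is irrational of bounded type (its partial quotients are bounded) and β ∉ ℤα + ℤ. Then there exist c > 0 and a strictly increasing sequence (n_k) such that for every k and every integer j with 0 ≤ |j| ≤ q_{n_k}, one has ‖β − jα‖ ≥ c/q_{n_k}. -/

import Mathlib

/-- Denominators of the continued fraction convergents of a real number. -/
noncomputable def contDen (α : ℝ) (n : ℕ) : ℝ := (GenContFract.of α).dens n

/-- Distance from a real number to the nearest integer. -/
noncomputable def nint (x : ℝ) : ℝ := |x - (round x : ℝ)|

/-- `α` is of bounded type: the partial quotients in its continued fraction expansion
are bounded. -/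
def BoundedType (α : ℝ) : Prop :=
  ∃ M : ℝ, ∀ n : ℕ, ∀ b : ℝ, (GenContFract.of α).partDens.get? n = some b → b ≤ M

/-- Membership in the subgroup ℤα + ℤ of ℝ. -/
def InZalphaZ (α β : ℝ) : Prop := ∃ m k : ℤ, β = (m : ℝ) * α + (k : ℝ)

/-!
If the partial quotients of `α` are at most `M`, the best-approximation property of the
convergents and the growth bound `q (n + 1) ≤ (M + 1) * q n` give the homogeneous estimate
`‖m α‖ ≥ 1 / ((M + 2) |m|)` for `m ≠ 0`. Put `c = 1 / (2 (M + 2)²)`. If from some index on every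
scale `q n` had a `j n` with `|j n| ≤ q n` and `‖β - j n α‖ < c / q n`, then `m = j n - j (n + 1)`
would satisfy `|m| ≤ (M + 2) q n` and `‖m α‖ < 2 c / q n`, forcing `m = 0`. So `j` would be
eventually constant, and `‖β - j α‖ = 0` puts `β` in `ℤα + ℤ`. Hence the good scales are infinite.
-/

open Filter GenContFract

theorem GenContFract.contsAux_mem_of_mem {K : Type*} [DivisionRing K] (S : Subring K)
    {g : GenContFract K} (hh : g.h ∈ S)
    (hs : ∀ n gp, g.s.get? n = some gp → gp.a ∈ S ∧ gp.b ∈ S) (n : ℕ) :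
    (g.contsAux n).a ∈ S ∧ (g.contsAux n).b ∈ S := by
  induction n using Nat.strong_induction_on with
  | _ n ih =>
    match n, ih with
    | 0, _ => simp [zeroth_contAux_eq_one_zero, S.one_mem, S.zero_mem]
    | 1, _ => simp [first_contAux_eq_h_one, hh, S.one_mem]
    | n + 2, ih =>
      rcases hgp : g.s.get? n with _ | gp
      · simpa [contsAux, hgp] using ih (n + 1) (by omega)
      · obtain ⟨ha, hb⟩ := hs n gp hgp
        obtain ⟨h₀a, h₀b⟩ := ih n (by omega)
        obtain ⟨h₁a, h₁b⟩ := ih (n + 1) (by omega)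
        simp only [contsAux, hgp, nextConts, nextNum, nextDen]
        exact ⟨S.add_mem (S.mul_mem hb h₁a) (S.mul_mem ha h₀a),
          S.add_mem (S.mul_mem hb h₁b) (S.mul_mem ha h₀b)⟩

theorem GenContFract.dens_succ_eq {K : Type*} [DivisionRing K] {g : GenContFract K} {n : ℕ}
    {gp : GenContFract.Pair K} (h : g.s.get? n = some gp) :
    g.dens (n + 1) = gp.b * g.dens n + gp.a * (g.contsAux n).b := by
  rw [den_eq_conts_b, den_eq_conts_b, nth_cont_eq_succ_nth_contAux, nth_cont_eq_succ_nth_contAux,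
    contsAux_recurrence h rfl rfl]

theorem abs_le_abs_add_of_mul_nonneg {a b : ℝ} (h : 0 ≤ a * b) : |a| ≤ |a + b| :=
  sq_le_sq.mp (by nlinarith [sq_nonneg b])

/-- `(m, r) = x • (q, p) + y • (q', p')` with integers `x ≠ 0` and `x * y ≤ 0`, so the two terms of
`m * ξ - r = x * (q * ξ - p) + y * (q' * ξ - p')` have the same sign. -/
theorem abs_mul_sub_le_of_isUnit_det {ξ : ℝ} {p q p' q' : ℤ}
    (hdet : IsUnit (p * q' - q * p')) (hq : 0 ≤ q) (hsign : (q * ξ - p) * (q' * ξ - p') ≤ 0)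
    {m r : ℤ} (hm : 0 < m) (hmq : m < q') :
    |q * ξ - p| ≤ |m * ξ - r| := by
  have hε := Int.isUnit_mul_self hdet
  set x := (p * q' - q * p') * (q' * r - p' * m)
  set y := (p * q' - q * p') * (p * m - q * r)
  have hr : x * p + y * p' = r := by linear_combination r * hε
  have hm' : x * q + y * q' = m := by linear_combination m * hε
  have hx : x ≠ 0 := by
    rintro hx
    rw [hx, zero_mul, zero_add] at hm'
    rcases le_or_gt y 0 with hy | hy <;> nlinarith
  have hxy : x * y ≤ 0 := by
    by_contra! hxy
    rcases lt_or_gt_of_ne hx with hx | hx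
    · have hy := neg_of_mul_pos_right hxy hx.le
      nlinarith [mul_nonpos_of_nonpos_of_nonneg hx.le hq]
    · have hy := pos_of_mul_pos_right hxy hx.le
      nlinarith [mul_nonneg hx.le hq]
  have hsplit : (m : ℝ) * ξ - r = x * (q * ξ - p) + y * (q' * ξ - p') := by
    rw [← hr, ← hm']
    push_cast
    ring
  have hx1 : (1 : ℝ) ≤ |(x : ℝ)| := by exact_mod_cast Int.one_le_abs hx
  calc |q * ξ - p| ≤ |(x : ℝ)| * |q * ξ - p| := le_mul_of_one_le_left (abs_nonneg _) hx1
    _ = |x * (q * ξ - p)| := (abs_mul _ _).symm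
    _ ≤ |(m : ℝ) * ξ - r| := by
      rw [hsplit]
      refine abs_le_abs_add_of_mul_nonneg ?_
      have : (x * y : ℝ) ≤ 0 := by exact_mod_cast hxy
      nlinarith

theorem exists_le_lt_succ_of_tendsto_atTop {β : Type*} [LinearOrder β] [NoMaxOrder β]
    {f : ℕ → β} (hf : Tendsto f atTop atTop) {x : β} (hx : f 0 ≤ x) :
    ∃ n, f n ≤ x ∧ x < f (n + 1) := by
  classical
  have hex : ∃ n, x < f (n + 1) := by
    obtain ⟨n, hn⟩ := (hf.eventually_gt_atTop x).exists_forall_of_atTop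
    exact ⟨n, hn (n + 1) n.le_succ⟩
  refine ⟨Nat.find hex, ?_, Nat.find_spec hex⟩
  cases h : Nat.find hex with
  | zero => exact hx
  | succ n => exact not_lt.mp (Nat.find_min hex (h ▸ n.lt_succ_self))

noncomputable def contNum (α : ℝ) (n : ℕ) : ℝ := (GenContFract.of α).nums n

section ContinuedFraction

variable {α : ℝ}

theorem exists_intCast_eq_contNum_contDen (n : ℕ) :
    (∃ p : ℤ, (p : ℝ) = contNum α n) ∧ ∃ q : ℤ, (q : ℝ) = contDen α n := by
  rw [contNum, contDen, num_eq_conts_a, den_eq_conts_b, nth_cont_eq_succ_nth_contAux]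
  simpa [RingHom.mem_range] using
    contsAux_mem_of_mem (Int.castRingHom ℝ).range (g := GenContFract.of α)
      (RingHom.mem_range.mpr ⟨⌊α⌋, by simp [of_h_eq_floor]⟩)
      (fun m gp hgp => by
        obtain ⟨ha, z, hz⟩ := of_partNum_eq_one_and_exists_int_partDen_eq hgp
        exact ⟨RingHom.mem_range.mpr ⟨1, by simp [ha]⟩,
          RingHom.mem_range.mpr ⟨z, by simp [hz]⟩⟩)
      (n + 1)

theorem one_le_contDen (n : ℕ) : 1 ≤ contDen α n := by
  induction n with
  | zero => simp [contDen, zeroth_den_eq_one]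
  | succ n ih => exact ih.trans of_den_mono

theorem contDen_monotone : Monotone (contDen α) :=
  monotone_nat_of_le_succ fun _ => of_den_mono

theorem contsAux_b_le_contDen (n : ℕ) : ((GenContFract.of α).contsAux n).b ≤ contDen α n := by
  cases n with
  | zero => simp [contDen, zeroth_contAux_eq_one_zero, zeroth_den_eq_one]
  | succ n =>
    rw [← nth_cont_eq_succ_nth_contAux, ← den_eq_conts_b]
    exact of_den_mono

theorem not_terminatedAt_of_irrational (hα : Irrational α) (n : ℕ) :
    ¬(GenContFract.of α).TerminatedAt n := fun h => by
  obtain ⟨q, hq⟩ := (terminates_iff_rat α).mp ⟨n, h⟩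
  exact hα ⟨q, hq.symm⟩

theorem tendsto_contDen_atTop (hα : Irrational α) : Tendsto (contDen α) atTop atTop := by
  refine tendsto_atTop_mono (fun n => ?_) tendsto_natCast_atTop_atTop
  have hfib : (Nat.fib (n + 1) : ℝ) ≤ contDen α n :=
    succ_nth_fib_le_of_nth_den (Or.inr (not_terminatedAt_of_irrational hα _))
  have : n + 1 ≤ Nat.fib (n + 1) + 1 := Nat.le_fib_add_one (n + 1)
  exact le_trans (by exact_mod_cast (by omega : n ≤ Nat.fib (n + 1))) hfib

theorem exists_stream_eq_some_of_irrational (hα : Irrational α) (n : ℕ) :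
    ∃ ifp : IntFractPair ℝ, IntFractPair.stream α n = some ifp ∧ 0 < ifp.fr ∧
      (GenContFract.of α).s.get? n = some ⟨1, (⌊ifp.fr⁻¹⌋ : ℝ)⟩ := by
  have h := not_terminatedAt_of_irrational hα n
  rw [of_terminatedAt_n_iff_succ_nth_intFractPair_stream_eq_none] at h
  obtain ⟨_, h⟩ := Option.ne_none_iff_exists'.mp h
  obtain ⟨ifp, hst, hfr, -⟩ := IntFractPair.succ_nth_stream_eq_some_iff.mp h
  refine ⟨ifp, hst, (IntFractPair.nth_stream_fr_nonneg hst).lt_of_ne' hfr, ?_⟩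
  exact get?_of_eq_some_of_succ_get?_intFractPair_stream
    (IntFractPair.stream_succ_of_some hst hfr)

theorem exists_contDen_mul_sub_contNum_eq (hα : Irrational α) (n : ℕ) :
    ∃ D, 0 < D ∧ D ≤ contDen α n + contDen α (n + 1) ∧
      contDen α n * α - contNum α n = (-1) ^ n / D := by
  obtain ⟨ifp, hst, hfr, hs⟩ := exists_stream_eq_some_of_irrational hα n
  have hq := one_le_contDen (α := α) n
  have hpq : 0 ≤ ((GenContFract.of α).contsAux n).b := zero_le_of_contsAux_b
  have herr := sub_convs_eq hst
  simp only [hfr.ne', if_false, ← nth_cont_eq_succ_nth_contAux, ← den_eq_conts_b,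
    conv_eq_num_div_den] at herr
  simp only [contDen, contNum] at hq ⊢
  -- `D = ξ * q n + q (n - 1)` for the complete quotient `ξ = ifp.fr⁻¹`, whose floor is the next
  -- partial quotient; hence `D < q (n + 1) + q n`.
  refine ⟨ifp.fr⁻¹ * (GenContFract.of α).dens n + ((GenContFract.of α).contsAux n).b,
    by positivity, ?_, ?_⟩
  · have := Int.lt_floor_add_one ifp.fr⁻¹
    rw [dens_succ_eq hs]
    nlinarith
  · rw [eq_div_iff (by positivity)]
    field_simp at herr
    field_simp
    linear_combination herr

theorem contNum_mul_contDen_succ_sub (hα : Irrational α) (n : ℕ) :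
    contNum α n * contDen α (n + 1) - contDen α n * contNum α (n + 1) = (-1) ^ (n + 1) :=
  SimpContFract.determinant (s := SimpContFract.of α) (not_terminatedAt_of_irrational hα n)

theorem one_le_of_partDens_le (hα : Irrational α) {M : ℝ}
    (hM : ∀ n b, (GenContFract.of α).partDens.get? n = some b → b ≤ M) : 1 ≤ M := by
  obtain ⟨ifp, -, -, hs⟩ := exists_stream_eq_some_of_irrational hα 0
  exact (of_one_le_get?_partDen (partDen_eq_s_b hs)).trans (hM 0 _ (partDen_eq_s_b hs))

theorem contDen_succ_le (hα : Irrational α) {M : ℝ}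
    (hM : ∀ n b, (GenContFract.of α).partDens.get? n = some b → b ≤ M) (n : ℕ) :
    contDen α (n + 1) ≤ (M + 1) * contDen α n := by
  obtain ⟨ifp, -, -, hs⟩ := exists_stream_eq_some_of_irrational hα n
  have hb := hM n _ (partDen_eq_s_b hs)
  have hpq := contsAux_b_le_contDen (α := α) n
  have hq := one_le_contDen (α := α) n
  simp only [contDen] at hpq hq ⊢
  rw [dens_succ_eq hs]
  nlinarith

theorem le_abs_mul_sub_of_partDens_le (hα : Irrational α) {M : ℝ}
    (hM : ∀ n b, (GenContFract.of α).partDens.get? n = some b → b ≤ M) {m : ℤ} (hm : m ≠ 0)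
    (r : ℤ) : 1 / ((M + 2) * |(m : ℝ)|) ≤ |m * α - r| := by
  wlog hpos : 0 < m generalizing m r
  · have := this (neg_ne_zero.mpr hm) (-r) (by omega)
    push_cast at this
    rwa [abs_neg, show -(m : ℝ) * α - -r = -(m * α - r) by ring, abs_neg] at this
  have hm1 : (1 : ℝ) ≤ m := by exact_mod_cast hpos
  obtain ⟨n, hlow, hhigh⟩ := exists_le_lt_succ_of_tendsto_atTop (tendsto_contDen_atTop hα)
    (show contDen α 0 ≤ m by simpa [contDen, zeroth_den_eq_one] using hm1)
  obtain ⟨⟨p, hp⟩, ⟨q, hq⟩⟩ := exists_intCast_eq_contNum_contDen (α := α) n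
  obtain ⟨⟨p', hp'⟩, ⟨q', hq'⟩⟩ := exists_intCast_eq_contNum_contDen (α := α) (n + 1)
  obtain ⟨D, hD, hDle, hE⟩ := exists_contDen_mul_sub_contNum_eq hα n
  obtain ⟨D', hD', -, hE'⟩ := exists_contDen_mul_sub_contNum_eq hα (n + 1)
  have hdet : IsUnit (p * q' - q * p') := by
    have h : ((p * q' - q * p' : ℤ) : ℝ) = ((-1 : ℤ) ^ (n + 1) : ℤ) := by
      push_cast
      rw [hp, hq, hp', hq']
      exact contNum_mul_contDen_succ_sub hα n
    exact Int.cast_inj.mp h ▸ isUnit_neg_one.pow _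
  have hbest : |(q : ℝ) * α - p| ≤ |m * α - r| := by
    refine abs_mul_sub_le_of_isUnit_det hdet ?_ ?_ hpos ?_
    · exact_mod_cast hq ▸ (zero_le_one.trans (one_le_contDen n))
    · rw [hp, hq, hp', hq', hE, hE', pow_succ]
      calc _ = -(((-1 : ℝ) ^ n) ^ 2 / (D * D')) := by ring
        _ ≤ 0 := neg_nonpos.mpr (by positivity)
    · exact_mod_cast hq' ▸ hhigh
  have hgrowth := contDen_succ_le hα hM n
  have hDm : D ≤ (M + 2) * |(m : ℝ)| := by
    rw [abs_of_pos (by exact_mod_cast hpos)]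
    nlinarith [one_le_contDen (α := α) n]
  calc 1 / ((M + 2) * |(m : ℝ)|) ≤ 1 / D := one_div_le_one_div_of_le hD hDm
    _ = |(q : ℝ) * α - p| := by
      rw [hp, hq, hE, abs_div, abs_pow, abs_neg, abs_one, one_pow, abs_of_pos hD]
    _ ≤ |m * α - r| := hbest

theorem nint_nonneg (x : ℝ) : 0 ≤ nint x := abs_nonneg _

theorem nint_le_abs_sub (x : ℝ) (z : ℤ) : nint x ≤ |x - z| := round_le x z

theorem nint_sub_le (a b : ℝ) : nint (a - b) ≤ nint a + nint b :=
  calc nint (a - b) ≤ |a - b - ((round a - round b : ℤ) : ℝ)| := nint_le_abs_sub _ _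
    _ = |(a - round a) - (b - round b)| := by push_cast; ring_nf
    _ ≤ nint a + nint b := abs_sub _ _

theorem le_nint_mul_of_partDens_le (hα : Irrational α) {M : ℝ}
    (hM : ∀ n b, (GenContFract.of α).partDens.get? n = some b → b ≤ M) {m : ℤ} (hm : m ≠ 0) :
    1 / ((M + 2) * |(m : ℝ)|) ≤ nint (m * α) :=
  le_abs_mul_sub_of_partDens_le hα hM hm _

theorem eq_of_nint_sub_lt (hα : Irrational α) {M : ℝ}
    (hM : ∀ n b, (GenContFract.of α).partDens.get? n = some b → b ≤ M) {β : ℝ} {n : ℕ}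
    {j j' : ℤ} (hj : |(j : ℝ)| ≤ contDen α n) (hj' : |(j' : ℝ)| ≤ contDen α (n + 1))
    (h : nint (β - j * α) < 1 / (2 * (M + 2) ^ 2) / contDen α n)
    (h' : nint (β - j' * α) < 1 / (2 * (M + 2) ^ 2) / contDen α (n + 1)) : j = j' := by
  by_contra hne
  have hM1 := one_le_of_partDens_le hα hM
  have hq := one_le_contDen (α := α) n
  have hsub : j - j' ≠ 0 := sub_ne_zero.mpr hne
  have hsize : |((j - j' : ℤ) : ℝ)| ≤ (M + 2) * contDen α n := by
    push_cast
    have := contDen_succ_le hα hM n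
    linarith [abs_sub (j : ℝ) j']
  have hupper : nint ((j - j' : ℤ) * α) < 2 * (1 / (2 * (M + 2) ^ 2) / contDen α n) := by
    have hmono : 1 / (2 * (M + 2) ^ 2) / contDen α (n + 1)
        ≤ 1 / (2 * (M + 2) ^ 2) / contDen α n :=
      div_le_div_of_nonneg_left (by positivity) (by positivity) (contDen_monotone n.le_succ)
    calc nint ((j - j' : ℤ) * α) = nint ((β - j' * α) - (β - j * α)) := by push_cast; ring_nf
      _ ≤ nint (β - j' * α) + nint (β - j * α) := nint_sub_le _ _
      _ < _ := by linarith
  have hlower := le_nint_mul_of_partDens_le hα hM hsub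
  have : 1 / ((M + 2) * ((M + 2) * contDen α n)) ≤ 1 / ((M + 2) * |((j - j' : ℤ) : ℝ)|) :=
    one_div_le_one_div_of_le (by positivity) (by gcongr)
  have : 2 * (1 / (2 * (M + 2) ^ 2) / contDen α n)
      = 1 / ((M + 2) * ((M + 2) * contDen α n)) := by
    field_simp
  linarith

theorem frequently_le_nint_sub (hα : Irrational α) {M : ℝ}
    (hM : ∀ n b, (GenContFract.of α).partDens.get? n = some b → b ≤ M) {β : ℝ}
    (hβ : ¬InZalphaZ α β) :
    ∃ᶠ n in atTop, ∀ j : ℤ, |(j : ℝ)| ≤ contDen α n →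
      1 / (2 * (M + 2) ^ 2) / contDen α n ≤ nint (β - j * α) := by
  rw [frequently_atTop]
  intro N
  by_contra! hbad
  choose j hj hlt using fun k => hbad (N + k) (Nat.le_add_right N k)
  have hconst : ∀ k, j k = j 0 := fun k => by
    induction k with
    | zero => rfl
    | succ k ih =>
      exact ih ▸ (eq_of_nint_sub_lt hα hM (hj k) (hj (k + 1)) (hlt k) (hlt (k + 1))).symm
  have hshift : Tendsto (fun k => N + k) atTop atTop := by
    simpa only [add_comm] using tendsto_add_atTop_nat N
  have hlim : Tendsto (fun k => 1 / (2 * (M + 2) ^ 2) / contDen α (N + k)) atTop (nhds 0) :=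
    tendsto_const_nhds.div_atTop ((tendsto_contDen_atTop hα).comp hshift)
  have hzero : nint (β - j 0 * α) = 0 :=
    le_antisymm (ge_of_tendsto' hlim fun k => (hconst k ▸ hlt k).le) (nint_nonneg _)
  exact hβ ⟨j 0, round (β - j 0 * α), by linarith [abs_eq_zero.mp hzero]⟩

end ContinuedFraction

theorem stmt9_general (α : ℝ) (hα : Irrational α)
    (hbdd : BoundedType α) (β : ℝ) (hβ : ¬ InZalphaZ α β) :
    ∃ c > (0:ℝ), ∃ nk : ℕ → ℕ, StrictMono nk ∧
      ∀ k : ℕ, ∀ j : ℤ, (|j| : ℝ) ≤ contDen α (nk k) →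
        nint (β - (j : ℝ) * α) ≥ c / contDen α (nk k) := by
  obtain ⟨M, hM⟩ := hbdd
  have hM1 := one_le_of_partDens_le hα hM
  obtain ⟨nk, hmono, hnk⟩ := extraction_of_frequently_atTop (frequently_le_nint_sub hα hM hβ)
  exact ⟨1 / (2 * (M + 2) ^ 2), by positivity, nk, hmono, hnk⟩

theorem stmt9 (α : ℝ) (hα : Irrational α) (hα01 : α ∈ Set.Ioo (0:ℝ) 1)
    (hbdd : BoundedType α) (β : ℝ) (hβ : ¬ InZalphaZ α β) :
    ∃ c > (0:ℝ), ∃ nk : ℕ → ℕ, StrictMono nk ∧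
      ∀ k : ℕ, ∀ j : ℤ, (|j| : ℝ) ≤ contDen α (nk k) →
        nint (β - (j : ℝ) * α) ≥ c / contDen α (nk k) :=
  stmt9_general α hα hbdd β hβ
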